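/- arXiv:1805.07018 — 2 statements merged into one kernel-verified Lean document; each statement's English description precedes it below -/
import Mathlib

section
/- Let C_k(𝒜, v) be a generalized affine Cartesian code with 2 ≤ n_1 ≤ n_2 ≤ ⋯ ≤ n_m and 0 ≤ k − 1 < Σ_{i=1}^m (n_i − 1). Write k − 1 = Σ_{i=1}^s (n_i − 1) + ℓ with 0 ≤ ℓ < n_{s+1} − 1 (where s = 0 and ℓ = k − 1 if k − 1 < n_1 − 1). Then the minimum distance of C_k(𝒜, v) equals (n_{s+1} − ℓ) ∏_{i=s+2}^m n_i, where the empty product is 1. Moreover, if k − 1 ≥ Σ_{i=1}^m (n_i − 1), the minimum distance is 1. -/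
open MvPolynomial

/-- The points of the Cartesian set `𝒜 = A 0 × ⋯ × A (m-1)`. -/
abbrev CartPts {K : Type*} {m : ℕ} (A : Fin m → Finset K) :=
  { x : Fin m → K // ∀ i, x i ∈ A i }

/-- The space `S_{<k}` of multivariate polynomials of total degree less than `k`. -/
def degLT (K : Type*) [Field K] (m k : ℕ) : Submodule K (MvPolynomial (Fin m) K) where
  carrier := {f | ∀ d ∈ f.support, (d.sum fun _ e => e) < k}
  zero_mem' := by simp
  add_mem' := fun {f g} hf hg d hd => by
    rcases Finset.mem_union.mp (MvPolynomial.support_add hd) with h | h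
    exacts [hf d h, hg d h]
  smul_mem' := fun c f hf d hd => hf d (MvPolynomial.support_smul hd)

/-- The evaluation map `ev : f ↦ (v_a · f(a))_{a ∈ 𝒜}`. -/
noncomputable def evalLM {K : Type*} [Field K] {m : ℕ} (A : Fin m → Finset K)
    (v : CartPts A → K) : MvPolynomial (Fin m) K →ₗ[K] (CartPts A → K) :=
  LinearMap.pi fun a => v a • (MvPolynomial.aeval (a.1 : Fin m → K)).toLinearMap

/-- The generalized affine Cartesian code `C_k(𝒜, v)`, the image of `S_{<k}` under `ev_k`. -/
noncomputable def cartCode {K : Type*} [Field K] {m : ℕ} (k : ℕ) (A : Fin m → Finset K)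
    (v : CartPts A → K) : Submodule K (CartPts A → K) :=
  Submodule.map (evalLM A v) (degLT K m k)

/-- Minimum distance (minimum Hamming weight of a nonzero codeword) of a linear code. -/
noncomputable def minDist {K : Type*} [Field K] [DecidableEq K] {ι : Type*} [Fintype ι]
    (C : Submodule K (ι → K)) : ℕ :=
  sInf {d : ℕ | ∃ c ∈ C, c ≠ 0 ∧ hammingNorm c = d}


section Aux
open Finset
set_option linter.unusedSectionVars false
set_option maxHeartbeats 1000000

/-- Recursive minimum-weight function. -/
def Wfn : List ℕ → ℕ → ℕ
  | [], _ => 1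
  | n :: L, D => if D < n - 1 then (n - D) * L.prod else Wfn L (D - (n - 1))

lemma Wfn_pos : ∀ (L : List ℕ), (∀ x ∈ L, 1 ≤ x) → ∀ D, 1 ≤ Wfn L D
  | [], _, D => le_refl _
  | n :: L, h, D => by
    have hL : ∀ x ∈ L, 1 ≤ x := fun x hx => h x (List.mem_cons_of_mem _ hx)
    rw [Wfn]
    split
    · have h1 : 1 ≤ L.prod := List.one_le_prod_of_one_le hL
      exact Nat.one_le_iff_ne_zero.2 (Nat.mul_ne_zero (by omega) (by omega))
    · exact Wfn_pos L hL _

lemma Wfn_zero : ∀ (L : List ℕ), (∀ x ∈ L, 1 ≤ x) → Wfn L 0 = L.prod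
  | [], _ => rfl
  | n :: L, h => by
    have hn : 1 ≤ n := h n List.mem_cons_self
    have hL : ∀ x ∈ L, 1 ≤ x := fun x hx => h x (List.mem_cons_of_mem _ hx)
    rw [Wfn, List.prod_cons]
    rcases Nat.lt_or_ge 0 (n-1) with h1 | h1
    · rw [if_pos h1, Nat.sub_zero]
    · rw [if_neg (by omega), Nat.zero_sub, Wfn_zero L hL]
      have hn1 : n = 1 := by omega
      rw [hn1, one_mul]

lemma Wfn_G : ∀ (L : List ℕ) (δ : ℕ), (∀ x ∈ L, δ + 1 ≤ x) →
    ∀ E, (δ + 1 - E) * L.prod ≤ (δ + 1) * Wfn L E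
  | [], δ, _, E => by simp only [Wfn, List.prod_nil, mul_one]; omega
  | m :: L, δ, h, E => by
    have hm : δ + 1 ≤ m := h m List.mem_cons_self
    have hL : ∀ x ∈ L, δ + 1 ≤ x := fun x hx => h x (List.mem_cons_of_mem _ hx)
    have hL1 : ∀ x ∈ L, 1 ≤ x := fun x hx => le_trans (by omega) (hL x hx)
    rw [Wfn, List.prod_cons]
    rcases Nat.lt_or_ge E (m-1) with h1 | h1
    · rw [if_pos h1]
      have key : (δ + 1 - E) * m ≤ (δ + 1) * (m - E) := by
        rcases Nat.lt_or_ge E (δ+1) with h2 | h2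
        · zify [show E ≤ δ + 1 by omega, show E ≤ m by omega]
          nlinarith [h2, hm]
        · rw [Nat.sub_eq_zero_of_le h2, zero_mul]; exact Nat.zero_le _
      calc (δ + 1 - E) * (m * L.prod) = ((δ + 1 - E) * m) * L.prod := by ring
        _ ≤ ((δ + 1) * (m - E)) * L.prod := Nat.mul_le_mul_right _ key
        _ = (δ + 1) * ((m - E) * L.prod) := by ring
    · rw [if_neg (by omega)]
      rcases Nat.lt_or_ge E (δ + 1) with h2 | h2
      · -- then m - 1 ≤ E ≤ δ ≤ m - 1, so E = δ = m - 1
        have hEm : E - (m-1) = 0 := by omega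
        have h3 : δ + 1 - E = 1 := by omega
        rw [hEm, Wfn_zero L hL1, h3, one_mul]
        have h4 : δ + 1 = m := by omega
        rw [h4]
      · rw [Nat.sub_eq_zero_of_le h2, zero_mul]; exact Nat.zero_le _

lemma Wfn_C : ∀ (L : List ℕ) (δ : ℕ), (∀ x ∈ L, δ + 1 ≤ x) →
    ∀ E, Wfn L E ≤ (δ + 1) * Wfn L (E + δ)
  | [], δ, _, E => by simp only [Wfn]; omega
  | m :: L, δ, h, E => by
    have hm : δ + 1 ≤ m := h m List.mem_cons_self
    have hL : ∀ x ∈ L, δ + 1 ≤ x := fun x hx => h x (List.mem_cons_of_mem _ hx)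
    have hL1 : ∀ x ∈ L, 1 ≤ x := fun x hx => le_trans (by omega) (hL x hx)
    rw [Wfn, Wfn]
    rcases Nat.lt_or_ge (E + δ) (m-1) with h1 | h1
    · rw [if_pos (by omega), if_pos h1]
      have key : m - E ≤ (δ + 1) * (m - (E + δ)) := by
        zify [show E ≤ m by omega, show E + δ ≤ m by omega]
        nlinarith [mul_nonneg (by omega : (0:ℤ) ≤ (δ:ℤ)) (by omega : (0:ℤ) ≤ (m:ℤ) - E - δ - 1)]
      calc (m - E) * L.prod ≤ ((δ+1) * (m - (E+δ))) * L.prod := Nat.mul_le_mul_right _ key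
        _ = (δ+1) * ((m - (E+δ)) * L.prod) := by ring
    · rw [if_neg (show ¬ (E + δ < m - 1) by omega)]
      rcases Nat.lt_or_ge E (m-1) with h2 | h2
      · rw [if_pos h2]
        have hEq : m - E = δ + 1 - (E + δ - (m - 1)) := by omega
        rw [hEq]
        exact Wfn_G L δ hL _
      · rw [if_neg (by omega)]
        have := Wfn_C L δ hL (E - (m-1))
        have hE : E + δ - (m-1) = E - (m-1) + δ := by omega
        rw [hE]; exact this

/-- KEY inequality. -/
lemma Wfn_key (L : List ℕ) (n t D : ℕ) (hn : 1 ≤ n) (hmono : ∀ x ∈ L, n ≤ x)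
    (ht : t ≤ n - 1) (htD : t ≤ D) :
    Wfn (n :: L) D ≤ Wfn L (D - t) * (n - t) := by
  have hL1 : ∀ x ∈ L, 1 ≤ x := fun x hx => le_trans hn (hmono x hx)
  rw [Wfn]
  rcases Nat.lt_or_ge D (n - 1) with h1 | h1
  · rw [if_pos h1]
    match L, hL1, hmono with
    | [], _, _ =>
      show (n - D) * List.prod [] ≤ Wfn [] (D - t) * (n - t)
      simp only [Wfn, List.prod_nil, mul_one, one_mul]
      omega
    | m :: L', hL', hmono' =>
      have hm : n ≤ m := hmono' m List.mem_cons_self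
      have hL'' : ∀ x ∈ L', 1 ≤ x := fun x hx => hL' x (List.mem_cons_of_mem _ hx)
      rw [Wfn, if_pos (by omega), List.prod_cons]
      have key : (n - D) * m ≤ (m - (D - t)) * (n - t) := by
        zify [htD, show D ≤ n by omega, show D - t ≤ m by omega, show t ≤ n by omega]
        nlinarith [mul_nonneg (by omega : (0:ℤ) ≤ (D:ℤ) - t) (by omega : (0:ℤ) ≤ (m:ℤ) - n + t)]
      calc (n - D) * (m * L'.prod) = ((n - D) * m) * L'.prod := by ring
        _ ≤ ((m - (D - t)) * (n - t)) * L'.prod := Nat.mul_le_mul_right _ key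
        _ = (m - (D - t)) * L'.prod * (n - t) := by ring
  · rw [if_neg (by omega)]
    have hδ : ∀ x ∈ L, (n - 1 - t) + 1 ≤ x := fun x hx => by have := hmono x hx; omega
    have := Wfn_C L (n - 1 - t) hδ (D - (n-1))
    have hE : D - (n-1) + (n - 1 - t) = D - t := by omega
    rw [hE] at this
    have h2 : n - 1 - t + 1 = n - t := by omega
    rw [h2] at this
    rw [mul_comm]; exact this


open MvPolynomial Finset

variable {K : Type*} [Field K] [DecidableEq K]

lemma degreeOf_monomial_le {m : ℕ} (d : Fin m →₀ ℕ) (c : K) (i : Fin m) :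
    degreeOf i (monomial d c) ≤ d i := by
  by_cases hc : c = 0
  · simp [hc]
  · rw [degreeOf_monomial_eq d i hc]

/-- Substitute a univariate polynomial into variable `i`. -/
noncomputable def subX {m : ℕ} (i : Fin m) (p : Polynomial K) : MvPolynomial (Fin m) K :=
  Polynomial.eval₂ MvPolynomial.C (X i) p

lemma eval_subX {m : ℕ} (i : Fin m) (p : Polynomial K) (a : Fin m → K) :
    eval a (subX i p) = p.eval (a i) := by
  unfold subX
  rw [Polynomial.hom_eval₂]
  have h1 : (eval a).comp (MvPolynomial.C : K →+* MvPolynomial (Fin m) K) = RingHom.id K := by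
    ext r; simp
  rw [h1, eval_X]
  rfl

lemma subX_eq_sum {m : ℕ} (i : Fin m) (p : Polynomial K) :
    subX i p = ∑ j ∈ Finset.range (p.natDegree + 1), MvPolynomial.C (p.coeff j) * X i ^ j := by
  unfold subX
  rw [Polynomial.eval₂_eq_sum_range]

lemma totalDegree_subX {m : ℕ} (i : Fin m) (p : Polynomial K) :
    (subX i p).totalDegree ≤ p.natDegree := by
  rw [subX_eq_sum]
  refine (totalDegree_finset_sum _ _).trans (Finset.sup_le fun j hj => ?_)
  calc (MvPolynomial.C (p.coeff j) * X i ^ j).totalDegree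
      ≤ (MvPolynomial.C (p.coeff j) : MvPolynomial (Fin m) K).totalDegree
        + (X i ^ j : MvPolynomial (Fin m) K).totalDegree := totalDegree_mul _ _
    _ ≤ 0 + j := by
        refine add_le_add (le_of_eq (totalDegree_C _)) ?_
        exact (totalDegree_pow _ _).trans (by simp [totalDegree_X])
    _ ≤ p.natDegree := by
        rw [Nat.zero_add]
        exact Nat.lt_succ_iff.1 (Finset.mem_range.1 hj)

lemma degreeOf_subX_self {m : ℕ} (i : Fin m) (p : Polynomial K) :
    degreeOf i (subX i p) ≤ p.natDegree := by
  rw [subX_eq_sum]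
  refine (degreeOf_sum_le _ _ _).trans (Finset.sup_le fun j hj => ?_)
  rw [C_mul_X_pow_eq_monomial]
  refine (degreeOf_monomial_le _ _ _).trans ?_
  simp only [Finsupp.single_eq_same]
  exact Nat.lt_succ_iff.1 (Finset.mem_range.1 hj)

lemma degreeOf_subX_other {m : ℕ} (i l : Fin m) (p : Polynomial K) (h : l ≠ i) :
    degreeOf l (subX i p) = 0 := by
  rw [subX_eq_sum]
  refine Nat.le_zero.1 ((degreeOf_sum_le _ _ _).trans (Finset.sup_le fun j hj => ?_))
  rw [C_mul_X_pow_eq_monomial]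
  refine (degreeOf_monomial_le _ _ _).trans ?_
  rw [Finsupp.single_eq_of_ne' (Ne.symm h)]

/-- Univariate: `x^d` agrees on `s` with a polynomial of degree `≤ min d (s.card - 1)`. -/
lemma exists_uni (s : Finset K) (hs : s.Nonempty) (d : ℕ) :
    ∃ p : Polynomial K, p.natDegree ≤ min d (s.card - 1) ∧ ∀ a ∈ s, p.eval a = a ^ d := by
  rcases Nat.lt_or_ge d s.card with h | h
  · exact ⟨Polynomial.X ^ d, by simp [Polynomial.natDegree_X_pow]; omega, fun a _ => by simp⟩
  · refine ⟨Lagrange.interpolate s id (fun x => x ^ d), ?_, fun a ha => ?_⟩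
    · have hcard : 1 ≤ s.card := Finset.card_pos.2 hs
      have hdeg := Lagrange.degree_interpolate_lt (r := fun x : K => x ^ d)
        (Set.injOn_id _) (s := s)
      have hmin : min d (s.card - 1) = s.card - 1 := by omega
      rw [hmin]
      by_cases hp : Lagrange.interpolate s id (fun x : K => x ^ d) = 0
      · simp [hp]
      · have := (Polynomial.natDegree_lt_iff_degree_lt hp).2 (by
          simpa using hdeg)
        omega
    · exact Lagrange.eval_interpolate_at_node _ (Set.injOn_id _) ha

/-- Monomial reduction. -/
lemma exists_red_monomial {m : ℕ} (A : Fin m → Finset K) (hA : ∀ i, (A i).Nonempty)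
    (d : Fin m →₀ ℕ) (c : K) :
    ∃ g : MvPolynomial (Fin m) K, (∀ i, degreeOf i g ≤ (A i).card - 1) ∧
      g.totalDegree ≤ (d.sum fun _ e => e) ∧
      ∀ a ∈ Fintype.piFinset A, eval a g = eval a (monomial d c) := by
  choose p hpdeg hpeval using fun i => exists_uni (A i) (hA i) (d i)
  refine ⟨MvPolynomial.C c * ∏ i, subX i (p i), fun l => ?_, ?_, fun a ha => ?_⟩
  · refine (degreeOf_mul_le _ _ _).trans ?_
    rw [degreeOf_C, Nat.zero_add]
    refine (degreeOf_prod_le _ _ _).trans ?_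
    calc ∑ i, degreeOf l (subX i (p i))
        = degreeOf l (subX l (p l)) := by
          refine Finset.sum_eq_single l (fun i _ hi => degreeOf_subX_other i l (p i) (Ne.symm hi))
            (fun h => absurd (Finset.mem_univ l) h)
      _ ≤ (p l).natDegree := degreeOf_subX_self l (p l)
      _ ≤ (A l).card - 1 := le_trans (hpdeg l) (min_le_right _ _)
  · refine (totalDegree_mul _ _).trans ?_
    rw [totalDegree_C, Nat.zero_add]
    refine (totalDegree_finset_prod _ _).trans ?_
    calc ∑ i, (subX i (p i)).totalDegree ≤ ∑ i, d i := by
          refine Finset.sum_le_sum fun i _ => ?_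
          exact le_trans (totalDegree_subX i (p i)) (le_trans (hpdeg i) (min_le_left _ _))
      _ = d.sum fun _ e => e := by rw [Finsupp.sum_fintype d (fun _ e => e) (fun _ => rfl)]
  · rw [map_mul, map_prod, eval_C, eval_monomial]
    congr 1
    rw [Finsupp.prod_fintype _ _ (fun i => pow_zero (a i))]
    refine Finset.prod_congr rfl fun i _ => ?_
    rw [eval_subX]
    exact hpeval i (a i) (Fintype.mem_piFinset.1 ha i)

/-- Full reduction lemma. -/
lemma exists_red {m : ℕ} (A : Fin m → Finset K) (hA : ∀ i, (A i).Nonempty)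
    (f : MvPolynomial (Fin m) K) :
    ∃ g : MvPolynomial (Fin m) K, (∀ i, degreeOf i g ≤ (A i).card - 1) ∧
      g.totalDegree ≤ f.totalDegree ∧
      ∀ a ∈ Fintype.piFinset A, eval a g = eval a f := by
  choose G hGdeg hGtot hGeval using fun d : Fin m →₀ ℕ =>
    exists_red_monomial A hA d (coeff d f)
  refine ⟨∑ d ∈ f.support, G d, fun i => ?_, ?_, fun a ha => ?_⟩
  · refine (degreeOf_sum_le _ _ _).trans (Finset.sup_le fun d _ => hGdeg d i)
  · refine (totalDegree_finset_sum _ _).trans (Finset.sup_le fun d hd => ?_)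
    exact le_trans (hGtot d) (le_totalDegree hd)
  · rw [map_sum]
    calc ∑ d ∈ f.support, eval a (G d)
        = ∑ d ∈ f.support, eval a (monomial d (coeff d f)) :=
          Finset.sum_congr rfl fun d _ => hGeval d a ha
      _ = eval a (∑ d ∈ f.support, monomial d (coeff d f)) := (map_sum _ _ _).symm
      _ = eval a f := by rw [support_sum_monomial_coeff]

/-- The main counting (lower bound) lemma. -/
lemma count_nonzero : ∀ (m : ℕ) (A : Fin m → Finset K),
    (∀ i, 2 ≤ (A i).card) → (Monotone fun i : Fin m => (A i).card) →
    ∀ (D : ℕ) (f : MvPolynomial (Fin m) K), f ≠ 0 →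
    (∀ i, degreeOf i f ≤ (A i).card - 1) → f.totalDegree ≤ D →
    Wfn (List.ofFn fun i => (A i).card) D ≤
      ((Fintype.piFinset A).filter (fun a => eval a f ≠ 0)).card := by
  intro m
  induction m with
  | zero =>
    intro A hA hmono D f hf hred hdeg
    rw [List.ofFn_zero]
    show Wfn [] D ≤ _
    rw [Wfn]
    obtain ⟨c, rfl⟩ := MvPolynomial.C_surjective (Fin 0) f
    have hc : c ≠ 0 := fun h => hf (by rw [h, map_zero])
    refine Nat.one_le_iff_ne_zero.2 (Finset.card_ne_zero_of_mem
      (a := (isEmptyElim : Fin 0 → K)) ?_)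
    refine Finset.mem_filter.2 ⟨Fintype.mem_piFinset.2 fun i => isEmptyElim i, by simp [hc]⟩
  | succ m IH =>
    intro A hA hmono D f hf hred hdeg
    set q := finSuccEquiv K m f with hq
    have hq0 : q ≠ 0 := fun h => hf ((map_eq_zero_iff _ (AlgEquiv.injective _)).1 h)
    set t := q.natDegree with htdef
    have ht : t = degreeOf 0 f := natDegree_finSuccEquiv f
    have ht1 : t ≤ (A 0).card - 1 := ht ▸ hred 0
    set g := q.coeff t with hgdef
    have hg : g ≠ 0 := Polynomial.leadingCoeff_ne_zero.2 hq0
    have htD : t ≤ D := by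
      rw [ht]
      exact le_trans (degreeOf_le_totalDegree f 0) hdeg
    have hgtot : g.totalDegree ≤ D - t := by
      have h2 : g.totalDegree + t ≤ f.totalDegree := totalDegree_coeff_finSuccEquiv_add_le f t hg
      omega
    have hgred : ∀ j : Fin m, degreeOf j g ≤ (A j.succ).card - 1 :=
      fun j => le_trans (degreeOf_coeff_finSuccEquiv f j t) (hred j.succ)
    -- tail data
    set A' : Fin m → Finset K := fun i => A i.succ with hA'def
    have hA' : ∀ i, 2 ≤ (A' i).card := fun i => hA i.succ
    have hmono' : Monotone fun i : Fin m => (A' i).card := fun i j hij =>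
      hmono (Fin.succ_le_succ_iff.mpr hij)
    have hIH := IH A' hA' hmono' (D - t) g hg hgred hgtot
    set S' := (Fintype.piFinset A').filter (fun a => eval a g ≠ 0) with hS'
    -- fibers
    have key : ∀ a' ∈ S', (Finset.filter
        (fun x => eval (Fin.cons x a' : Fin (m+1) → K) f ≠ 0) (A 0)).card
        ≥ (A 0).card - t := by
      intro a' ha'
      have hga' : eval a' g ≠ 0 := (Finset.mem_filter.1 ha').2
      set pa := Polynomial.map (eval a') q with hpa
      have hpane : pa ≠ 0 := fun h => hga' (by
        have : pa.coeff t = 0 := by rw [h]; simp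
        rw [hpa, Polynomial.coeff_map] at this
        exact this)
      have hpadeg : pa.natDegree ≤ t := Polynomial.natDegree_map_le
      have heval : ∀ x : K, eval (Fin.cons x a' : Fin (m+1) → K) f = pa.eval x :=
        fun x => eval_eq_eval_mv_eval' a' x f
      have hzero : ((A 0).filter (fun x => eval (Fin.cons x a' : Fin (m+1) → K) f = 0)).card
          ≤ t := by
        calc ((A 0).filter (fun x => eval (Fin.cons x a' : Fin (m+1) → K) f = 0)).card
            ≤ pa.roots.toFinset.card := by
              refine Finset.card_le_card fun x hx => ?_
              rw [Multiset.mem_toFinset, Polynomial.mem_roots hpane, Polynomial.IsRoot,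
                ← heval x]
              exact (Finset.mem_filter.1 hx).2
          _ ≤ Multiset.card pa.roots := pa.roots.toFinset_card_le
          _ ≤ pa.natDegree := pa.card_roots'
          _ ≤ t := hpadeg
      have := Finset.card_filter_add_card_filter_not
        (s := A 0) (p := fun x => eval (Fin.cons x a' : Fin (m+1) → K) f = 0)
      have hsplit : ((A 0).filter (fun x => eval (Fin.cons x a' : Fin (m+1) → K) f = 0)).card
          + ((A 0).filter (fun x => eval (Fin.cons x a' : Fin (m+1) → K) f ≠ 0)).card
          = (A 0).card := by simpa using this
      omega
    -- disjoint fibers inside the full filter set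
    set Fib : (Fin m → K) → Finset (Fin (m+1) → K) := fun a' =>
      ((A 0).filter (fun x => eval (Fin.cons x a' : Fin (m+1) → K) f ≠ 0)).image
        (fun x => Fin.cons x a') with hFib
    have hFibCard : ∀ a', (Fib a').card =
        ((A 0).filter (fun x => eval (Fin.cons x a' : Fin (m+1) → K) f ≠ 0)).card := by
      intro a'
      refine Finset.card_image_of_injective _ fun x y hxy => ?_
      have := congrFun hxy 0
      simpa using this
    have hsub : S'.biUnion Fib ⊆ (Fintype.piFinset A).filter (fun a => eval a f ≠ 0) := by
      intro a ha
      obtain ⟨a', ha', haf⟩ := Finset.mem_biUnion.1 ha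
      obtain ⟨x, hx, rfl⟩ := Finset.mem_image.1 haf
      refine Finset.mem_filter.2 ⟨Fintype.mem_piFinset.2 fun i => ?_, (Finset.mem_filter.1 hx).2⟩
      refine Fin.cases ?_ ?_ i
      · simpa using (Finset.mem_filter.1 hx).1
      · intro j
        have := Fintype.mem_piFinset.1 (Finset.mem_filter.1 ha').1 j
        simpa using this
    have hdisj : ∀ a ∈ S', ∀ b ∈ S', a ≠ b → Disjoint (Fib a) (Fib b) := by
      intro a _ b _ hab
      refine Finset.disjoint_left.2 fun z hza hzb => hab ?_
      obtain ⟨x, _, rfl⟩ := Finset.mem_image.1 hza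
      obtain ⟨y, _, hyz⟩ := Finset.mem_image.1 hzb
      funext j
      have := congrFun hyz j.succ
      simpa using this.symm
    have hbU : (S'.biUnion Fib).card = ∑ a' ∈ S', (Fib a').card :=
      Finset.card_biUnion hdisj
    have hcount : ((Fintype.piFinset A).filter (fun a => eval a f ≠ 0)).card
        ≥ ((A 0).card - t) * S'.card := by
      calc ((Fintype.piFinset A).filter (fun a => eval a f ≠ 0)).card
          ≥ (S'.biUnion Fib).card := Finset.card_le_card hsub
        _ = ∑ a' ∈ S', (Fib a').card := hbU
        _ ≥ ∑ _a' ∈ S', ((A 0).card - t) := by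
            refine Finset.sum_le_sum fun a' ha' => ?_
            rw [hFibCard a']
            exact key a' ha'
        _ = S'.card * ((A 0).card - t) := by rw [Finset.sum_const, smul_eq_mul]
        _ = ((A 0).card - t) * S'.card := mul_comm _ _
    -- numeric side
    have hofn : (List.ofFn fun i : Fin (m+1) => (A i).card)
        = (A 0).card :: (List.ofFn fun i : Fin m => (A' i).card) := by
      rw [List.ofFn_succ]
    have hmonoL : ∀ x ∈ (List.ofFn fun i : Fin m => (A' i).card), (A 0).card ≤ x := by
      intro x hx
      obtain ⟨i, rfl⟩ := List.mem_ofFn.1 hx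
      exact hmono (Fin.zero_le _)
    have hkey := Wfn_key (List.ofFn fun i : Fin m => (A' i).card) ((A 0).card) t D
      (by have := hA 0; omega) hmonoL ht1 htD
    rw [hofn]
    calc Wfn ((A 0).card :: List.ofFn fun i : Fin m => (A' i).card) D
        ≤ Wfn (List.ofFn fun i : Fin m => (A' i).card) (D - t) * ((A 0).card - t) := hkey
      _ ≤ S'.card * ((A 0).card - t) := Nat.mul_le_mul_right _ hIH
      _ = ((A 0).card - t) * S'.card := mul_comm _ _
      _ ≤ _ := hcount

/-- Closed form of `Wfn` at decomposed degree values. -/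
lemma Wfn_ofFn_eq : ∀ (s m : ℕ) (hs : s < m) (g : Fin m → ℕ), (∀ i, 1 ≤ g i) →
    ∀ ℓ, ℓ < g ⟨s, hs⟩ - 1 →
    Wfn (List.ofFn g) ((∑ i ∈ Finset.univ.filter (fun i : Fin m => (i : ℕ) < s), (g i - 1)) + ℓ)
      = (g ⟨s, hs⟩ - ℓ) * ∏ i ∈ Finset.univ.filter (fun i : Fin m => s < (i : ℕ)), g i := by
  intro s
  induction s with
  | zero =>
    intro m hs g hg ℓ hℓ
    obtain ⟨m', rfl⟩ : ∃ m', m = m' + 1 := ⟨m - 1, by omega⟩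
    rw [List.ofFn_succ, Wfn]
    have hsum : (∑ i ∈ Finset.univ.filter (fun i : Fin (m'+1) => (i : ℕ) < 0), (g i - 1)) = 0 := by
      simp
    have h0 : g 0 = g ⟨0, hs⟩ := rfl
    rw [hsum, Nat.zero_add, if_pos (show ℓ < g 0 - 1 from hℓ)]
    congr 1
    rw [List.prod_ofFn, Finset.prod_filter, Fin.prod_univ_succ,
      if_neg (show ¬ (0:ℕ) < ((0 : Fin (m'+1)) : ℕ) by simp), Nat.one_mul]
    refine Finset.prod_congr rfl fun i _ => ?_
    rw [if_pos (show (0:ℕ) < ((i.succ : Fin (m'+1)) : ℕ) by simp [Fin.val_succ])]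
  | succ s IH =>
    intro m hs g hg ℓ hℓ
    obtain ⟨m', rfl⟩ : ∃ m', m = m' + 1 := ⟨m - 1, by omega⟩
    rw [List.ofFn_succ, Wfn]
    have hsum : (∑ i ∈ Finset.univ.filter (fun i : Fin (m'+1) => (i : ℕ) < s+1), (g i - 1))
        = (g 0 - 1) + ∑ i ∈ Finset.univ.filter (fun i : Fin m' => (i : ℕ) < s),
            (g i.succ - 1) := by
      rw [Finset.sum_filter, Fin.sum_univ_succ, Finset.sum_filter,
        if_pos (show ((0 : Fin (m'+1)) : ℕ) < s + 1 by simp)]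
      congr 1
      refine Finset.sum_congr rfl fun i _ => ?_
      have : ((i.succ : Fin (m'+1)) : ℕ) < s + 1 ↔ (i : ℕ) < s := by
        rw [Fin.val_succ]; omega
      by_cases h : (i : ℕ) < s
      · rw [if_pos h, if_pos (this.2 h)]
      · rw [if_neg h, if_neg (fun hc => h (this.1 hc))]
    rw [hsum]
    have hg0 : 1 ≤ g 0 := hg 0
    rw [if_neg (show ¬ (g 0 - 1 + (∑ i ∈ Finset.univ.filter (fun i : Fin m' => (i : ℕ) < s),
      (g i.succ - 1)) + ℓ < g 0 - 1) by omega)]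
    have harith : g 0 - 1 + (∑ i ∈ Finset.univ.filter (fun i : Fin m' => (i : ℕ) < s),
        (g i.succ - 1)) + ℓ - (g 0 - 1)
        = (∑ i ∈ Finset.univ.filter (fun i : Fin m' => (i : ℕ) < s), (g i.succ - 1)) + ℓ := by
      omega
    rw [harith]
    have hs' : s < m' := by omega
    have := IH m' hs' (fun i => g i.succ) (fun i => hg i.succ) ℓ (by exact hℓ)
    rw [this]
    have h1 : g (⟨s, hs'⟩ : Fin m').succ = g ⟨s+1, hs⟩ := rfl
    rw [h1]
    congr 1
    rw [Finset.prod_filter, Finset.prod_filter,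
      Fin.prod_univ_succ (f := fun i : Fin (m'+1) => if s + 1 < (i:ℕ) then g i else 1),
      if_neg (show ¬ s + 1 < ((0 : Fin (m'+1)) : ℕ) by simp), Nat.one_mul]
    refine Finset.prod_congr rfl fun i _ => ?_
    have : s + 1 < ((i.succ : Fin (m'+1)) : ℕ) ↔ s < (i : ℕ) := by rw [Fin.val_succ]; omega
    by_cases h : s < (i : ℕ)
    · rw [if_pos h, if_pos (this.2 h)]
    · rw [if_neg h, if_neg (fun hc => h (this.1 hc))]

/-- Construction of low-degree polynomials with prescribed nonvanishing set. -/
lemma construct {m : ℕ} (A C : Fin m → Finset K) (hC : ∀ i, C i ⊆ A i) :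
    ∃ f : MvPolynomial (Fin m) K, f.totalDegree ≤ ∑ i, (C i).card ∧
      (Fintype.piFinset A).filter (fun a => eval a f ≠ 0) =
        Fintype.piFinset (fun i => A i \ C i) := by
  refine ⟨∏ i, ∏ γ ∈ C i, (X i - MvPolynomial.C γ), ?_, ?_⟩
  · refine (totalDegree_finset_prod _ _).trans (Finset.sum_le_sum fun i _ => ?_)
    refine (totalDegree_finset_prod _ _).trans ?_
    calc ∑ γ ∈ C i, (X i - MvPolynomial.C γ).totalDegree
        ≤ ∑ _γ ∈ C i, 1 := Finset.sum_le_sum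
          (f := fun γ : K => (X i - MvPolynomial.C γ : MvPolynomial (Fin m) K).totalDegree) (g := fun _ => 1)
          (fun γ _ => le_trans (totalDegree_sub _ _)
            (by simp [totalDegree_X, totalDegree_C]))
      _ = (C i).card := by rw [Finset.sum_const, smul_eq_mul, Nat.mul_one]
  · ext a
    have he : eval a (∏ i, ∏ γ ∈ C i, (X i - MvPolynomial.C γ))
        = ∏ i, ∏ γ ∈ C i, (a i - γ) := by
      rw [map_prod]
      refine Finset.prod_congr rfl fun i _ => ?_
      rw [map_prod]
      exact Finset.prod_congr rfl fun γ _ => by rw [map_sub, eval_X, eval_C]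
    simp only [Finset.mem_filter, Fintype.mem_piFinset, Finset.mem_sdiff, he]
    constructor
    · rintro ⟨hmem, hne⟩ i
      rw [Finset.prod_ne_zero_iff] at hne
      have h2 := hne i (Finset.mem_univ i)
      rw [Finset.prod_ne_zero_iff] at h2
      exact ⟨hmem i, fun hin => h2 (a i) hin (sub_self (a i))⟩
    · intro h
      refine ⟨fun i => (h i).1, ?_⟩
      rw [Finset.prod_ne_zero_iff]
      intro i _
      rw [Finset.prod_ne_zero_iff]
      intro γ hγ
      exact sub_ne_zero.2 fun hEq => (h i).2 (hEq ▸ hγ)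

lemma evalLM_apply {K : Type*} [Field K] {m : ℕ} (A : Fin m → Finset K)
    (v : CartPts A → K) (f : MvPolynomial (Fin m) K) (a : CartPts A) :
    evalLM A v f a = v a * eval (a.1 : Fin m → K) f := by
  show v a • (MvPolynomial.aeval (a.1 : Fin m → K)) f = _
  rw [smul_eq_mul]
  congr 1

lemma ham_eq {K : Type*} [Field K] [DecidableEq K] [Fintype K] {m : ℕ} (A : Fin m → Finset K)
    (v : CartPts A → K) (hv : ∀ a, v a ≠ 0) (f : MvPolynomial (Fin m) K) :
    hammingNorm (evalLM A v f) =
      ((Fintype.piFinset A).filter (fun x => eval x f ≠ 0)).card := by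
  unfold hammingNorm
  refine Finset.card_bij (fun a _ => a.1) ?_ ?_ ?_
  · intro a ha
    rw [Finset.mem_filter] at ha ⊢
    refine ⟨Fintype.mem_piFinset.2 a.2, ?_⟩
    have h2 := ha.2
    rw [evalLM_apply] at h2
    exact fun h => h2 (by rw [h, mul_zero])
  · intro a _ b _ hab
    exact Subtype.ext hab
  · intro x hx
    rw [Finset.mem_filter] at hx
    refine ⟨⟨x, fun i => Fintype.mem_piFinset.1 hx.1 i⟩, ?_, rfl⟩
    rw [Finset.mem_filter]
    refine ⟨Finset.mem_univ _, ?_⟩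
    rw [evalLM_apply]
    exact mul_ne_zero (hv _) hx.2

end Aux

/-- The minimum distance of `C_k(𝒜, v)` for `2 ≤ n_1 ≤ ⋯ ≤ n_m`: if
`k − 1 = Σ_{i=1}^s (n_i − 1) + ℓ` with `0 ≤ ℓ < n_{s+1} − 1`, it equals
`(n_{s+1} − ℓ) ∏_{i=s+2}^m n_i`; and it is `1` when `k − 1 ≥ Σ (n_i − 1)`. -/
theorem minDist_cartCode {K : Type*} [Field K] [Fintype K] [DecidableEq K]
    {m : ℕ} (hm : 1 ≤ m) (A : Fin m → Finset K) (hA : ∀ i, 2 ≤ (A i).card)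
    (hmono : Monotone fun i : Fin m => (A i).card)
    (v : CartPts A → K) (hv : ∀ a, v a ≠ 0) (k : ℕ) (hk : 1 ≤ k) :
    (∀ (s ℓ : ℕ) (hs : s < m),
      k - 1 = (∑ i ∈ Finset.univ.filter (fun i : Fin m => (i : ℕ) < s), ((A i).card - 1)) + ℓ →
      ℓ < (A ⟨s, hs⟩).card - 1 →
      minDist (cartCode k A v) =
        ((A ⟨s, hs⟩).card - ℓ) *
          ∏ i ∈ Finset.univ.filter (fun i : Fin m => s < (i : ℕ)), (A i).card) ∧
    (∑ i, ((A i).card - 1) ≤ k - 1 → minDist (cartCode k A v) = 1) := by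
  classical
  have hne : ∀ i, (A i).Nonempty := fun i => Finset.card_pos.1 (by have := hA i; omega)
  choose b hb using hne
  have hne : ∀ i, (A i).Nonempty := fun i => ⟨b i, hb i⟩
  constructor
  · intro s ℓ hs hdecomp hℓ
    set W := ((A ⟨s, hs⟩).card - ℓ) *
      ∏ i ∈ Finset.univ.filter (fun i : Fin m => s < (i : ℕ)), (A i).card with hWdef
    obtain ⟨B, hBsub, hBcard⟩ := Finset.exists_subset_card_eq
      (s := A ⟨s, hs⟩) (n := ℓ) (by have := hA ⟨s, hs⟩; omega)
    set Cs : Fin m → Finset K := fun i =>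
      if (i : ℕ) < s then A i \ {b i} else if (i : ℕ) = s then B else ∅ with hCsdef
    have hCsub : ∀ i, Cs i ⊆ A i := by
      intro i
      rw [hCsdef]; dsimp only
      split_ifs with h1 h2
      · exact Finset.sdiff_subset
      · have h3 : i = ⟨s, hs⟩ := Fin.ext h2
        rw [h3]; exact hBsub
      · exact Finset.empty_subset _
    obtain ⟨f, hfdeg, hfset⟩ := construct A Cs hCsub
    have hcard1 : ∀ i : Fin m, (Cs i).card =
        if (i : ℕ) < s then (A i).card - 1 else if (i : ℕ) = s then ℓ else 0 := by
      intro i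
      rw [hCsdef]; dsimp only
      split_ifs with h1 h2
      · rw [Finset.card_sdiff_of_subset (Finset.singleton_subset_iff.2 (hb i)), Finset.card_singleton]
      · exact hBcard
      · exact Finset.card_empty
    have hsum : ∑ i, (Cs i).card =
        (∑ i ∈ Finset.univ.filter (fun i : Fin m => (i : ℕ) < s), ((A i).card - 1)) + ℓ := by
      rw [Finset.sum_congr rfl (fun i _ => hcard1 i)]
      rw [← Finset.sum_filter_add_sum_filter_not Finset.univ (fun i : Fin m => (i : ℕ) < s)]
      congr 1
      · exact Finset.sum_congr rfl fun i hi => if_pos (Finset.mem_filter.1 hi).2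
      · rw [Finset.sum_eq_single_of_mem (⟨s, hs⟩ : Fin m)
          (Finset.mem_filter.2 ⟨Finset.mem_univ _, by simp⟩) ?_]
        · rw [if_neg (by simp), if_pos rfl]
        · intro j hj hjne
          have hj2 := (Finset.mem_filter.1 hj).2
          rw [if_neg hj2, if_neg (fun hc => hjne (Fin.ext hc))]
    have hfk : f ∈ degLT K m k := by
      intro d hd
      have h1 := MvPolynomial.le_totalDegree hd
      have h2 : f.totalDegree ≤ k - 1 := by
        rw [hsum, ← hdecomp] at hfdeg; exact hfdeg
      omega
    have hmemcode : evalLM A v f ∈ cartCode k A v := ⟨f, hfk, rfl⟩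
    have hc2 : ∀ i : Fin m, (A i \ Cs i).card =
        if (i : ℕ) < s then 1 else if (i : ℕ) = s then (A ⟨s, hs⟩).card - ℓ
          else (A i).card := by
      intro i
      rw [hCsdef]; dsimp only
      split_ifs with h1 h2
      · rw [Finset.sdiff_sdiff_self_left, Finset.inter_singleton_of_mem (hb i),
          Finset.card_singleton]
      · have h3 : i = ⟨s, hs⟩ := Fin.ext h2
        rw [h3, Finset.card_sdiff_of_subset hBsub, hBcard]
      · rw [Finset.sdiff_empty]
    have hprod : ∏ i, (A i \ Cs i).card = W := by
      rw [Finset.prod_congr rfl (fun i _ => hc2 i)]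
      rw [← Finset.prod_filter_mul_prod_filter_not Finset.univ (fun i : Fin m => s < (i : ℕ))]
      rw [mul_comm, hWdef]
      congr 1
      · rw [Finset.prod_eq_single_of_mem (⟨s, hs⟩ : Fin m)
          (Finset.mem_filter.2 ⟨Finset.mem_univ _, by simp⟩) ?_]
        · rw [if_neg (by simp), if_pos rfl]
        · intro j hj hjne
          have hj2 := (Finset.mem_filter.1 hj).2
          have hj3 : (j : ℕ) < s := by
            rcases Nat.lt_or_ge (j : ℕ) s with h | h
            · exact h
            · exact absurd (Fin.ext (by omega : ((j : Fin m) : ℕ) = s)) hjne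
          rw [if_pos hj3]
      · refine Finset.prod_congr rfl fun i hi => ?_
        have h1 := (Finset.mem_filter.1 hi).2
        rw [if_neg (by omega), if_neg (by omega)]
    have hham : hammingNorm (evalLM A v f) = W := by
      rw [ham_eq A v hv f, hfset, Fintype.card_piFinset, hprod]
    have hWpos : 0 < W := by
      rw [hWdef]
      refine Nat.mul_pos (by have := hA ⟨s, hs⟩; omega)
        (Finset.prod_pos fun i _ => by have := hA i; omega)
    have hcne : evalLM A v f ≠ 0 := by
      rw [← hammingNorm_ne_zero_iff, hham]; omega
    have hmemset : W ∈ {d : ℕ | ∃ c ∈ cartCode k A v, c ≠ 0 ∧ hammingNorm c = d} :=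
      ⟨evalLM A v f, hmemcode, hcne, hham⟩
    have hlow : ∀ d ∈ {d : ℕ | ∃ c ∈ cartCode k A v, c ≠ 0 ∧ hammingNorm c = d}, W ≤ d := by
      rintro d ⟨c, hcmem, hcne', rfl⟩
      obtain ⟨f', hf'mem, rfl⟩ := hcmem
      have hf'deg : f'.totalDegree ≤ k - 1 := by
        rw [MvPolynomial.totalDegree]
        exact Finset.sup_le fun d hd => by have := hf'mem d hd; omega
      obtain ⟨g, hgred, hgdeg, hgeval⟩ := exists_red A hne f'
      have hceq : evalLM A v f' = evalLM A v g := funext fun a => by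
        rw [evalLM_apply, evalLM_apply, hgeval a.1 (Fintype.mem_piFinset.2 a.2)]
      have hgne : g ≠ 0 := fun h => hcne' (by rw [hceq, h, map_zero])
      rw [hceq, ham_eq A v hv g]
      have hWfn : Wfn (List.ofFn fun i => (A i).card) (k - 1) = W := by
        rw [hdecomp]
        exact Wfn_ofFn_eq s m hs (fun i => (A i).card)
          (fun i => by show 1 ≤ (A i).card; have := hA i; omega) ℓ hℓ
      calc W = Wfn (List.ofFn fun i => (A i).card) (k - 1) := hWfn.symm
        _ ≤ _ := count_nonzero m A hA hmono (k - 1) g hgne hgred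
            (le_trans hgdeg hf'deg)
    exact le_antisymm (Nat.sInf_le hmemset) (le_csInf ⟨_, hmemset⟩ hlow)
  · intro hge
    set Cs : Fin m → Finset K := fun i => A i \ {b i} with hCsdef
    obtain ⟨f, hfdeg, hfset⟩ := construct A Cs (fun i => Finset.sdiff_subset)
    have hsum : ∑ i, (Cs i).card = ∑ i, ((A i).card - 1) :=
      Finset.sum_congr rfl fun i _ => by
        rw [hCsdef]; dsimp only
        rw [Finset.card_sdiff_of_subset (Finset.singleton_subset_iff.2 (hb i)), Finset.card_singleton]
    have hfk : f ∈ degLT K m k := by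
      intro d hd
      have h1 := MvPolynomial.le_totalDegree hd
      have h2 : f.totalDegree ≤ ∑ i, ((A i).card - 1) := by rw [← hsum]; exact hfdeg
      omega
    have hham : hammingNorm (evalLM A v f) = 1 := by
      rw [ham_eq A v hv f, hfset, Fintype.card_piFinset]
      refine Finset.prod_eq_one fun i _ => ?_
      rw [hCsdef]; dsimp only
      rw [Finset.sdiff_sdiff_self_left, Finset.inter_singleton_of_mem (hb i),
        Finset.card_singleton]
    have hcne : evalLM A v f ≠ 0 := by
      rw [← hammingNorm_ne_zero_iff, hham]; omega
    have hmemset : (1 : ℕ) ∈ {d : ℕ | ∃ c ∈ cartCode k A v, c ≠ 0 ∧ hammingNorm c = d} :=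
      ⟨evalLM A v f, ⟨f, hfk, rfl⟩, hcne, hham⟩
    have hlow : ∀ d ∈ {d : ℕ | ∃ c ∈ cartCode k A v, c ≠ 0 ∧ hammingNorm c = d}, 1 ≤ d := by
      rintro d ⟨c, _, hcne', rfl⟩
      exact Nat.one_le_iff_ne_zero.2 (hammingNorm_ne_zero_iff.2 hcne')
    exact le_antisymm (Nat.sInf_le hmemset) (le_csInf ⟨_, hmemset⟩ hlow)
end

section
/- Let 1 ≤ k ≤ Σ_{i=1}^m (n_i − 1), and let f ∈ S_{<k} and g ∈ S_{<k′} with k′ := Σ_{i=1}^m (n_i − 1) − k + 1, both with deg_{X_i} < n_i for all i. Then the vectors (v_1 f(a_1), …, v_n f(a_n)) and (g(a_1)/(v_1 L_{a_1}(a_1)), …, g(a_n)/(v_n L_{a_n}(a_n))) are orthogonal with respect to the standard dot product on K^n; equivalently, Σ_{a ∈ 𝒜} f(a)g(a)/L_a(a) = 0. -/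
open MvPolynomial

/-- For a point `α` of `𝒜`, the polynomial `L_α(X) = ∏ i, L_i(X_i)/(X_i − α_i)`. -/
noncomputable def LaPoly {K : Type*} [Field K] [DecidableEq K] {m : ℕ} (A : Fin m → Finset K)
    (α : Fin m → K) : MvPolynomial (Fin m) K :=
  ∏ i, ∏ c ∈ (A i).erase (α i), (MvPolynomial.X i - MvPolynomial.C c)

open Polynomial Finset in
lemma basis_coeff {K : Type*} [Field K] [DecidableEq K] {A : Finset K} {α : K} (hα : α ∈ A) :
    (Lagrange.basis A id α).coeff (A.card - 1) = ∏ c ∈ A.erase α, (α - c)⁻¹ := by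
  have hinj : Set.InjOn (id : K → K) A := Function.injective_id.injOn
  have hnd := Lagrange.natDegree_basis hinj hα
  rw [← hnd, Polynomial.coeff_natDegree, Lagrange.basis, leadingCoeff_prod]
  refine prod_congr rfl fun c hc => ?_
  rw [Lagrange.basisDivisor, leadingCoeff_mul, leadingCoeff_C, leadingCoeff_X_sub_C, mul_one, id, id]

open Polynomial Finset in
lemma sum_pow_mul_inv_prod_eq_zero {K : Type*} [Field K] [DecidableEq K]
    (A : Finset K) (d : ℕ) (h : d + 1 < A.card) :
    ∑ α ∈ A, α ^ d * ∏ c ∈ A.erase α, (α - c)⁻¹ = 0 := by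
  have hinj : Set.InjOn (id : K → K) A := Function.injective_id.injOn
  have hdeg : (Polynomial.X ^ d : K[X]).degree < A.card := by
    rw [Polynomial.degree_X_pow]; exact_mod_cast Nat.lt_of_succ_lt h
  have heq := Lagrange.eq_interpolate hinj hdeg
  have hco := congrArg (fun p : K[X] => p.coeff (A.card - 1)) heq
  simp only [Polynomial.coeff_X_pow] at hco
  rw [if_neg (by omega), Lagrange.interpolate_apply, finset_sum_coeff] at hco
  rw [eq_comm] at hco
  rw [← hco]
  refine sum_congr rfl fun α hα => ?_
  rw [Polynomial.coeff_C_mul, basis_coeff hα, Polynomial.eval_pow, Polynomial.eval_X, id]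

open Finset in
lemma key_sum_eq_zero {K : Type*} [Field K] [DecidableEq K] {m : ℕ} (A : Fin m → Finset K)
    (h : MvPolynomial (Fin m) K)
    (hsup : ∀ d ∈ h.support, ∃ i, d i + 1 < (A i).card) :
    ∑ a ∈ Fintype.piFinset A,
      MvPolynomial.eval a h * (∏ i, ∏ c ∈ (A i).erase (a i), (a i - c))⁻¹ = 0 := by
  simp_rw [MvPolynomial.eval_eq', Finset.sum_mul, ← prod_inv_distrib, mul_assoc,
    ← Finset.prod_mul_distrib]
  rw [Finset.sum_comm]
  refine sum_eq_zero fun d hd => ?_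
  rw [← Finset.mul_sum, ← Finset.prod_univ_sum (t := A)
    (f := fun j y => y ^ d j * ∏ c ∈ (A j).erase y, (y - c)⁻¹)]
  obtain ⟨i, hi⟩ := hsup d hd
  rw [Finset.prod_eq_zero (Finset.mem_univ i) (sum_pow_mul_inv_prod_eq_zero _ _ hi), mul_zero]

/-- For `f ∈ S_{<k}` and `g ∈ S_{<k'}` with `k' = Σ (n_i − 1) − k + 1`, both of degree `< n_i`
in each `X_i`, the vectors `(v_a f(a))_a` and `(g(a)/(v_a L_a(a)))_a` are orthogonal;
equivalently `Σ_{a ∈ 𝒜} f(a)g(a)/L_a(a) = 0`. -/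
theorem eval_dot_product_eq_zero {K : Type*} [Field K] [Fintype K] [DecidableEq K]
    {m : ℕ} (hm : 1 ≤ m) (A : Fin m → Finset K) (hA : ∀ i, (A i).Nonempty)
    (v : CartPts A → K) (hv : ∀ a, v a ≠ 0) (k : ℕ) (hk : 1 ≤ k)
    (hk2 : k ≤ ∑ i, ((A i).card - 1))
    (f g : MvPolynomial (Fin m) K)
    (hf : f.totalDegree < k) (hfi : ∀ i, MvPolynomial.degreeOf i f < (A i).card)
    (hg : g.totalDegree < ∑ i, ((A i).card - 1) - k + 1)
    (hgi : ∀ i, MvPolynomial.degreeOf i g < (A i).card) :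
    (∑ a : CartPts A, (v a * MvPolynomial.eval (a.1 : Fin m → K) f) *
      ((v a * MvPolynomial.eval (a.1 : Fin m → K) (LaPoly A a.1))⁻¹ *
        MvPolynomial.eval (a.1 : Fin m → K) g) = 0) ∧
    (∑ a : CartPts A, MvPolynomial.eval (a.1 : Fin m → K) f *
      MvPolynomial.eval (a.1 : Fin m → K) g /
        MvPolynomial.eval (a.1 : Fin m → K) (LaPoly A a.1) = 0) := by
  have hsup : ∀ d ∈ (f * g).support, ∃ i, d i + 1 < (A i).card := by
    intro d hd
    by_contra hcon
    push_neg at hcon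
    have h1 : (d.sum fun _ e => e) ≤ (f * g).totalDegree := MvPolynomial.le_totalDegree hd
    have h1' : (d.sum fun _ e => e) = ∑ i, d i := Finsupp.sum_fintype _ _ (fun _ => rfl)
    have h2 : (f * g).totalDegree ≤ f.totalDegree + g.totalDegree :=
      MvPolynomial.totalDegree_mul f g
    have h3 : ∑ i, ((A i).card - 1) ≤ ∑ i, d i :=
      Finset.sum_le_sum fun i _ => by have := hcon i; omega
    omega
  have key := key_sum_eq_zero A (f * g) hsup
  have hL : ∀ a : Fin m → K, MvPolynomial.eval a (LaPoly A a) =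
      ∏ i, ∏ c ∈ (A i).erase (a i), (a i - c) := by
    intro a; simp [LaPoly]
  have H2 : ∑ a : CartPts A, MvPolynomial.eval (a.1 : Fin m → K) f *
      MvPolynomial.eval (a.1 : Fin m → K) g /
        MvPolynomial.eval (a.1 : Fin m → K) (LaPoly A a.1) = 0 := by
    rw [← Finset.sum_subtype (Fintype.piFinset A) (fun x => Fintype.mem_piFinset)
      (fun x => MvPolynomial.eval x f * MvPolynomial.eval x g /
        MvPolynomial.eval x (LaPoly A x))]
    rw [← key]
    refine Finset.sum_congr rfl fun a _ => ?_
    rw [hL, div_eq_mul_inv, map_mul]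
  refine ⟨?_, H2⟩
  rw [← H2]
  refine Finset.sum_congr rfl fun a _ => ?_
  rw [mul_inv, div_eq_mul_inv]
  calc (v a * MvPolynomial.eval (a.1 : Fin m → K) f) *
      ((v a)⁻¹ * (MvPolynomial.eval (a.1 : Fin m → K) (LaPoly A a.1))⁻¹ *
        MvPolynomial.eval (a.1 : Fin m → K) g)
      = (v a * (v a)⁻¹) * (MvPolynomial.eval (a.1 : Fin m → K) f *
        MvPolynomial.eval (a.1 : Fin m → K) g *
        (MvPolynomial.eval (a.1 : Fin m → K) (LaPoly A a.1))⁻¹) := by ring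
    _ = _ := by rw [mul_inv_cancel₀ (hv a), one_mul]
end
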